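/- Let 1 < q < ∞ and γ > 0. If g ∈ L^q_loc(ℝⁿ) and there is a point x₀ ∈ ℝⁿ such that η_{q,γ}(g; x₀) < ∞, then g defines a tempered distribution: for every integer k > γ + n there exists a constant C (depending on n, q, γ, k, x₀) such that |∫_{ℝⁿ} g(y)φ(y) dy| ≤ C p_k(φ) η_{q,γ}(g; x₀) for every Schwartz function φ, where p_k(φ) = Σ_{|β|≤k} sup_x (1+|x|)^k |∂^β φ(x)|. In particular, φ ↦ ∫ gφ is a continuous linear functional on S(ℝⁿ). -/

import Mathlib

open MeasureTheory ENNReal Filter Topology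

noncomputable section

/-- Euclidean space `ℝⁿ`. -/
abbrev En (n : ℕ) : Type := EuclideanSpace ℝ (Fin n)

/-- The (closed) cube centered at `x` with side length `r`. -/
def cube {n : ℕ} (x : En n) (r : ℝ) : Set (En n) :=
  {y | ∀ i, |y i - x i| ≤ r / 2}

/-- The normalized `L^q` seminorm `|g|_{q,Q} = (|Q|⁻¹ ∫_Q |g|^q)^{1/q}` over a set `Q`. -/
def lqQ {n : ℕ} (q : ℝ) (g : En n → ℝ) (Q : Set (En n)) : ℝ≥0∞ :=
  ((volume Q)⁻¹ * ∫⁻ y in Q, ENNReal.ofReal (|g y| ^ q)) ^ (1 / q)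

/-- The Calderón maximal function `η_{q,γ}(g;x) = sup_{r>0} r^{-γ} |g|_{q,Q(x,r)}`. -/
def eta {n : ℕ} (q γ : ℝ) (g : En n → ℝ) (x : En n) : ℝ≥0∞ :=
  ⨆ (r : ℝ) (_ : 0 < r), ENNReal.ofReal (r ^ (-γ)) * lqQ q g (cube x r)

/-- `P` is (the function given by) a real polynomial on `ℝⁿ` of total degree at most `k`. -/
def IsPolyDegLe {n : ℕ} (k : ℕ) (P : En n → ℝ) : Prop :=
  ∃ p : MvPolynomial (Fin n) ℝ, p.totalDegree ≤ k ∧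
    ∀ x : En n, P x = MvPolynomial.eval (fun i => x i) p

/-- `g` belongs locally to `L^q` (on every cube). -/
def MemLqLoc {n : ℕ} (q : ℝ) (g : En n → ℝ) : Prop :=
  Measurable g ∧ ∀ (x : En n) (r : ℝ), 0 < r →
    ∫⁻ y in cube x r, ENNReal.ofReal (|g y| ^ q) < ⊤

/-- The maximal function `N_{q,γ}(G;x)` of the class `G` of `g` in `E^q_k`. -/
def Nmax {n : ℕ} (q γ : ℝ) (k : ℕ) (g : En n → ℝ) (x : En n) : ℝ≥0∞ :=
  ⨅ P : {P : En n → ℝ // IsPolyDegLe k P}, eta q γ (fun y => g y - P.1 y) x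

/-- The seminorm `‖G‖_{q,Q}` of the class `G` of `g` in `E^q_k`. -/
def qnormQ {n : ℕ} (q : ℝ) (k : ℕ) (g : En n → ℝ) (Q : Set (En n)) : ℝ≥0∞ :=
  ⨅ P : {P : En n → ℝ // IsPolyDegLe k P}, lqQ q (fun y => g y - P.1 y) Q

/-- A weight: nonnegative, locally integrable, positive a.e. -/
def IsWeight {n : ℕ} (w : En n → ℝ) : Prop :=
  Measurable w ∧ (∀ x, 0 ≤ w x) ∧ (∀ᵐ x ∂(volume : Measure (En n)), 0 < w x) ∧
    LocallyIntegrable w volume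

/-- `w(Q) = ∫_Q w`. -/
def wInt {n : ℕ} (w : En n → ℝ) (Q : Set (En n)) : ℝ≥0∞ :=
  ∫⁻ y in Q, ENNReal.ofReal (w y)

/-- The Muckenhoupt class `A_s`, `1 < s < ∞`. -/
def MuckA {n : ℕ} (s : ℝ) (w : En n → ℝ) : Prop :=
  ∃ C : ℝ≥0∞, C < ⊤ ∧ ∀ (x : En n) (r : ℝ), 0 < r →
    ((volume (cube x r))⁻¹ * wInt w (cube x r)) *
      ((volume (cube x r))⁻¹ *
        ∫⁻ y in cube x r, ENNReal.ofReal (w y) ^ (-(1 / (s - 1)))) ^ (s - 1) ≤ C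

/-- The class `A_∞ = ∪_{s} A_s`. -/
def MuckAinf {n : ℕ} (w : En n → ℝ) : Prop := ∃ s : ℝ, 1 < s ∧ MuckA s w

/-- The reverse Hölder class `RH_s`. -/
def RevHolder {n : ℕ} (s : ℝ) (w : En n → ℝ) : Prop :=
  ∃ C : ℝ≥0∞, C < ⊤ ∧ ∀ (x : En n) (r : ℝ), 0 < r →
    ((volume (cube x r))⁻¹ * ∫⁻ y in cube x r, ENNReal.ofReal (w y) ^ s) ^ (1 / s) ≤
      C * ((volume (cube x r))⁻¹ * wInt w (cube x r))

/-- The weighted Calderón–Hardy "norm" `‖G‖ = ‖N_{q,γ}(G;·)‖_{L^p(w)}` of the class of `g`. -/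
def chNorm {n : ℕ} (q γ : ℝ) (k : ℕ) (p : ℝ) (w : En n → ℝ) (g : En n → ℝ) : ℝ≥0∞ :=
  (∫⁻ x, Nmax q γ k g x ^ p * ENNReal.ofReal (w x)) ^ (1 / p)

/-- Directional derivative along the `i`-th coordinate. -/
def dirDeriv {n : ℕ} (i : Fin n) (f : En n → ℝ) : En n → ℝ :=
  fun x => fderiv ℝ f x (EuclideanSpace.single i 1)

/-- Iterated directional derivatives along a list of coordinates. -/
def pderivList {n : ℕ} : List (Fin n) → (En n → ℝ) → En n → ℝ
  | [], f => f
  | i :: L, f => dirDeriv i (pderivList L f)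

/-- The partial derivative `∂^β` for a multi-index `β`. -/
def pderivM {n : ℕ} (β : Fin n → ℕ) (f : En n → ℝ) : En n → ℝ :=
  pderivList ((List.finRange n).flatMap fun i => List.replicate (β i) i) f

/-- The Laplacian. -/
def lap {n : ℕ} (f : En n → ℝ) : En n → ℝ :=
  fun x => ∑ i, dirDeriv i (dirDeriv i f) x

/-- A Schwartz function (as a plain function). -/
def IsSchwartzFn {n : ℕ} (φ : En n → ℝ) : Prop :=
  ContDiff ℝ (⊤ : ℕ∞) φ ∧ ∀ (k : ℕ) (β : Fin n → ℕ), ∃ C : ℝ,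
    ∀ x, (1 + ‖x‖) ^ k * |pderivM β φ x| ≤ C

/-- The Schwartz seminorm `p_N(φ) = Σ_{|β| ≤ N} sup_x (1+|x|)^N |∂^β φ(x)|`. -/
def pSemi {n : ℕ} (N : ℕ) (φ : En n → ℝ) : ℝ≥0∞ :=
  ∑ β : Fin n → Fin (N + 1),
    if (∑ i, (β i : ℕ)) ≤ N then
      ⨆ x : En n, ENNReal.ofReal ((1 + ‖x‖) ^ N * |pderivM (fun i => (β i : ℕ)) φ x|)
    else 0

/-- The grand maximal function of a distribution given by the pairing `u`. -/
def grandMax {n : ℕ} (N : ℕ) (u : (En n → ℝ) → ℝ) (x : En n) : ℝ≥0∞ :=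
  ⨆ (t : ℝ) (_ : 0 < t) (φ : En n → ℝ) (_ : IsSchwartzFn φ) (_ : pSemi N φ ≤ 1),
    ENNReal.ofReal |u fun y => (t ^ n)⁻¹ * φ (t⁻¹ • (x - y))|

/-- The weighted Hardy space "norm" `‖f‖_{H^p(w)} = ‖M_{F_N} f‖_{L^p(w)}`. -/
def hardyNorm {n : ℕ} (N : ℕ) (p : ℝ) (w : En n → ℝ) (u : (En n → ℝ) → ℝ) : ℝ≥0∞ :=
  (∫⁻ x, grandMax N u x ^ p * ENNReal.ofReal (w x)) ^ (1 / p)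

/-- The uncentered Hardy–Littlewood maximal operator (ℝ≥0∞-valued version). -/
def maxFnE {n : ℕ} (f : En n → ℝ≥0∞) (x : En n) : ℝ≥0∞ :=
  ⨆ (z : En n) (r : ℝ) (_ : 0 < r) (_ : x ∈ cube z r),
    (volume (cube z r))⁻¹ * ∫⁻ y in cube z r, f y

/-- The uncentered Hardy–Littlewood maximal operator over cubes. -/
def maxFn {n : ℕ} (f : En n → ℝ) (x : En n) : ℝ≥0∞ :=
  maxFnE (fun y => ENNReal.ofReal |f y|) x

/-- The fundamental solution `Φ` of `Δ^m`. -/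
def Phi {n : ℕ} (m : ℕ) (C₁ C₂ : ℝ) (x : En n) : ℝ :=
  if Even n ∧ n ≤ 2 * m then C₁ * ‖x‖ ^ ((2 * (m : ℤ) - (n : ℤ))) * Real.log ‖x‖
  else C₂ * ‖x‖ ^ ((2 * (m : ℤ) - (n : ℤ)))

/-- The truncated singular integral maximal operator `T*_α`. -/
def Tstar {n : ℕ} (m : ℕ) (C₁ C₂ : ℝ) (α : Fin n → ℕ) (a : En n → ℝ) (x : En n) : ℝ≥0∞ :=
  ⨆ (ε : ℝ) (_ : 0 < ε),
    ENNReal.ofReal |∫ y in {y : En n | ε < dist x y}, pderivM α (Phi m C₁ C₂) (x - y) * a y|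

/-- The critical index `q_w` of a weight. -/
def qIndex {n : ℕ} (w : En n → ℝ) : ℝ := sInf {s : ℝ | 1 < s ∧ MuckA s w}

/-- The set of reverse Hölder exponents of `w`. -/
def rhSet {n : ℕ} (w : En n → ℝ) : Set ℝ := {s : ℝ | 1 < s ∧ RevHolder s w}

/-- The quantity `r_w/(r_w - 1)`, with the convention that it is `1` when `r_w = ∞`. -/
def rwFactor {n : ℕ} (w : En n → ℝ) : ℝ :=
  haveI := Classical.propDecidable (BddAbove (rhSet w))
  if BddAbove (rhSet w) then sSup (rhSet w) / (sSup (rhSet w) - 1) else 1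

/-- A `w-(p, p₀, d)` atom supported in the cube `Q(x₀, r)`. -/
def IsAtomOn {n : ℕ} (p p₀ : ℝ) (d : ℤ) (w : En n → ℝ) (x₀ : En n) (r : ℝ)
    (a : En n → ℝ) : Prop :=
  Measurable a ∧ Function.support a ⊆ cube x₀ r ∧
    (∫⁻ y, ENNReal.ofReal (|a y| ^ p₀)) ^ (1 / p₀) ≤
      volume (cube x₀ r) ^ (1 / p₀) * (wInt w (cube x₀ r)) ^ (-(1 / p)) ∧
    ∀ β : Fin n → ℕ, ((∑ i, β i : ℤ) ≤ d) →
      ∫ y, (∏ i, y i ^ β i) * a y = 0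



section AuxLemmas
variable {n : ℕ}


lemma cube_eq_preimage (x : En n) (r : ℝ) :
    cube x r = (MeasurableEquiv.toLp 2 (Fin n → ℝ)).symm ⁻¹'
      (Set.univ.pi fun i => Set.Icc (x i - r/2) (x i + r/2)) := by
  ext y
  simp only [cube, Set.mem_setOf_eq, Set.mem_preimage, Set.mem_pi, Set.mem_univ, true_implies,
    Set.mem_Icc, MeasurableEquiv.toLp_symm_apply]
  refine forall_congr' fun i => ?_
  rw [abs_le]
  constructor <;> rintro ⟨a, b⟩ <;> exact ⟨by linarith, by linarith⟩

lemma volume_cube (x : En n) (r : ℝ) : volume (cube x r) = ENNReal.ofReal r ^ n := by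
  rw [cube_eq_preimage,
    (EuclideanSpace.volume_preserving_symm_measurableEquiv_toLp (Fin n)).measure_preimage
      ((MeasurableSet.univ_pi fun i => measurableSet_Icc).nullMeasurableSet)]
  rw [volume_pi_pi]
  have : ∀ i : Fin n, volume (Set.Icc (x i - r/2) (x i + r/2)) = ENNReal.ofReal r := by
    intro i; rw [Real.volume_Icc]; ring_nf
  simp [this]

lemma measurableSet_cube (x : En n) (r : ℝ) : MeasurableSet (cube x r) := by
  rw [cube_eq_preimage]
  exact (MeasurableEquiv.toLp 2 (Fin n → ℝ)).symm.measurable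
    (MeasurableSet.univ_pi fun i => measurableSet_Icc)

lemma cube_mono (x : En n) {r r' : ℝ} (h : r ≤ r') : cube x r ⊆ cube x r' :=
  fun y hy i => le_trans (hy i) (by linarith)

lemma abs_coord_le_norm (z : En n) (i : Fin n) : |z i| ≤ ‖z‖ := by
  rw [EuclideanSpace.norm_eq]
  have h1 : |z i| = Real.sqrt (‖z i‖ ^ 2) := by
    rw [Real.sqrt_sq_eq_abs, Real.norm_eq_abs, abs_abs]
  rw [h1]
  apply Real.sqrt_le_sqrt
  exact Finset.single_le_sum (f := fun j => ‖z j‖ ^ 2) (fun j _ => sq_nonneg _) (Finset.mem_univ i)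

lemma pderivM_zero (φ : En n → ℝ) : pderivM (fun _ => (0:ℕ)) φ = φ := by
  unfold pderivM
  have : ((List.finRange n).flatMap fun i => List.replicate 0 i) = [] := by
    simp [List.flatMap]
  rw [this]
  rfl

lemma rpow_two_pow (j : ℕ) (e : ℝ) : ((2:ℝ)^j) ^ e = ((2:ℝ)^e)^j := by
  rw [← Real.rpow_natCast 2 j, ← Real.rpow_mul (by norm_num), mul_comm,
    Real.rpow_mul (by norm_num), Real.rpow_natCast]

lemma sup_le_pSemi (k : ℕ) (φ : En n → ℝ) :
    (⨆ y : En n, ENNReal.ofReal ((1 + ‖y‖)^k * |φ y|)) ≤ pSemi k φ := by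
  unfold pSemi
  have h0 : ((fun _ => (0 : Fin (k+1))) : Fin n → Fin (k+1)) ∈ Finset.univ := Finset.mem_univ _
  refine le_trans ?_ (Finset.single_le_sum (fun β _ => zero_le) h0)
  rw [if_pos (by simp)]
  have : (fun i : Fin n => (((fun _ => (0 : Fin (k+1))) : Fin n → Fin (k+1)) i : ℕ)) =
      (fun _ => (0:ℕ)) := by funext i; simp
  rw [this, pderivM_zero]

lemma cube_integral_bound {q γ : ℝ} (hq : 1 < q) (hγ : 0 < γ) (g : En n → ℝ) (x₀ : En n)
    {r : ℝ} (hr : 0 < r) :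
    ∫⁻ y in cube x₀ r, ENNReal.ofReal (|g y| ^ q) ≤
      volume (cube x₀ r) * (ENNReal.ofReal (r ^ γ) * eta q γ g x₀) ^ q := by
  have hq0 : (0:ℝ) < q := lt_trans one_pos hq
  set E := eta q γ g x₀ with hE
  have h1 : ENNReal.ofReal (r ^ (-γ)) * lqQ q g (cube x₀ r) ≤ E := by
    refine le_iSup_of_le r ?_
    simp [hr]
  have hrpow : ENNReal.ofReal (r ^ γ) * ENNReal.ofReal (r ^ (-γ)) = 1 := by
    rw [← ENNReal.ofReal_mul (by positivity), ← Real.rpow_add hr]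
    simp
  have h2 : lqQ q g (cube x₀ r) ≤ ENNReal.ofReal (r ^ γ) * E := by
    calc lqQ q g (cube x₀ r) = (ENNReal.ofReal (r ^ γ) * ENNReal.ofReal (r ^ (-γ))) *
          lqQ q g (cube x₀ r) := by rw [hrpow, one_mul]
      _ = ENNReal.ofReal (r ^ γ) * (ENNReal.ofReal (r ^ (-γ)) * lqQ q g (cube x₀ r)) := by ring
      _ ≤ ENNReal.ofReal (r ^ γ) * E := mul_le_mul_right h1 _
  have h3 : (volume (cube x₀ r))⁻¹ * (∫⁻ y in cube x₀ r, ENNReal.ofReal (|g y| ^ q)) ≤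
      (ENNReal.ofReal (r ^ γ) * E) ^ q := by
    have := ENNReal.rpow_le_rpow h2 hq0.le
    rwa [lqQ, ← ENNReal.rpow_mul, one_div, inv_mul_cancel₀ hq0.ne', ENNReal.rpow_one] at this
  have hvol : volume (cube x₀ r) = ENNReal.ofReal r ^ n := volume_cube x₀ r
  have hvne : volume (cube x₀ r) ≠ 0 := by
    rw [hvol]; exact pow_ne_zero _ (by simp [hr])
  have hvtop : volume (cube x₀ r) ≠ ⊤ := by
    rw [hvol]; exact ENNReal.pow_ne_top ENNReal.ofReal_ne_top
  calc ∫⁻ y in cube x₀ r, ENNReal.ofReal (|g y| ^ q)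
      = volume (cube x₀ r) * ((volume (cube x₀ r))⁻¹ *
        (∫⁻ y in cube x₀ r, ENNReal.ofReal (|g y| ^ q))) := by
        rw [← mul_assoc, ENNReal.mul_inv_cancel hvne hvtop, one_mul]
    _ ≤ volume (cube x₀ r) * (ENNReal.ofReal (r ^ γ) * E) ^ q := mul_le_mul_right h3 _


lemma key_estimate {q γ : ℝ} (hq : 1 < q) (hγ : 0 < γ) {g : En n → ℝ} (hgm : Measurable g)
    (x₀ : En n) {k : ℕ} (hk : γ + n < k) {φ : En n → ℝ} (hφm : Measurable φ)
    {M : ℝ} (hM : ∀ y, (1 + ‖y‖) ^ k * |φ y| ≤ M) :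
    ∫⁻ y, ENNReal.ofReal |g y * φ y| ≤
      (ENNReal.ofReal ((4 * (1 + ‖x₀‖)) ^ k) *
        (1 - ENNReal.ofReal ((2:ℝ) ^ ((n:ℝ) + γ - (k:ℝ))))⁻¹)
        * ENNReal.ofReal M * eta q γ g x₀ := by
  have hq0 : (0:ℝ) < q := lt_trans one_pos hq
  set E := eta q γ g x₀ with hE
  set q' := q.conjExponent with hq'def
  have hqq' : q.HolderConjugate q' := Real.HolderConjugate.conjExponent hq
  have hq'0 : 0 < q' := hqq'.symm.pos
  set K : ℝ := (4 * (1 + ‖x₀‖)) ^ k with hK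
  set ρ : ℝ := (2:ℝ) ^ ((n:ℝ) + γ - (k:ℝ)) with hρ
  have hρ0 : 0 < ρ := Real.rpow_pos_of_pos (by norm_num) _
  have hK1 : (1:ℝ) ≤ K := one_le_pow₀ (by nlinarith [norm_nonneg x₀])
  have hK0 : (0:ℝ) ≤ K := le_trans zero_le_one hK1
  have hM0 : (0:ℝ) ≤ M := le_trans (by positivity) (hM 0)
  have hKM0 : (0:ℝ) ≤ K * M := mul_nonneg hK0 hM0
  -- cubes and annuli
  set Q : ℕ → Set (En n) := fun j => cube x₀ (2 ^ j) with hQ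
  have hQmono : Monotone Q := fun a b hab =>
    cube_mono x₀ (pow_le_pow_right₀ (by norm_num) hab)
  set A : ℕ → Set (En n) := disjointed Q with hA
  have hAsub : ∀ j, A j ⊆ Q j := disjointed_subset Q
  have hAU : (⋃ j, A j) = Set.univ := by
    rw [hA, iUnion_disjointed]
    apply Set.eq_univ_of_forall
    intro y
    obtain ⟨m, hm⟩ := pow_unbounded_of_one_lt (2 * ‖y - x₀‖) (by norm_num : (1:ℝ) < 2)
    simp only [Set.mem_iUnion, hQ, cube, Set.mem_setOf_eq]
    refine ⟨m, fun i => ?_⟩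
    have h1 : |y i - x₀ i| ≤ ‖y - x₀‖ := by
      simpa using abs_coord_le_norm (y - x₀) i
    linarith
  -- pointwise bound for φ on annuli
  have hφbd : ∀ j : ℕ, ∀ y ∈ A j, |φ y| ≤ K * M / ((2:ℝ) ^ j) ^ k := by
    intro j y hy
    rw [le_div_iff₀ (by positivity)]
    have hMy : (1 + ‖y‖) ^ k * |φ y| ≤ M := hM y
    have h1k : (1:ℝ) ≤ (1 + ‖y‖) ^ k := one_le_pow₀ (by nlinarith [norm_nonneg y])
    have hφM : |φ y| ≤ M := by nlinarith [abs_nonneg (φ y)]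
    cases j with
    | zero => simpa using by nlinarith [abs_nonneg (φ y)]
    | succ j =>
      rw [hA, ← Order.succ_eq_add_one, Monotone.disjointed_succ hQmono (not_isMax j)] at hy
      have hy2 : y ∉ Q j := hy.2
      simp only [hQ, cube, Set.mem_setOf_eq, not_forall, not_le] at hy2
      obtain ⟨i, hi⟩ := hy2
      have h2 : (2:ℝ) ^ j / 2 < ‖y - x₀‖ :=
        lt_of_lt_of_le hi (by simpa using abs_coord_le_norm (y - x₀) i)
      have h3 : ‖y - x₀‖ ≤ ‖y‖ + ‖x₀‖ := norm_sub_le y x₀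
      have h4 : (2:ℝ) ^ (j+1) ≤ 4 * (1 + ‖x₀‖) * (1 + ‖y‖) := by
        have he : (2:ℝ) ^ (j+1) = 4 * ((2:ℝ) ^ j / 2) := by ring
        nlinarith [norm_nonneg y, norm_nonneg x₀]
      have h5 : ((2:ℝ) ^ (j+1)) ^ k ≤ K * (1 + ‖y‖) ^ k := by
        rw [hK, ← mul_pow]
        exact pow_le_pow_left₀ (by positivity) h4 k
      calc |φ y| * ((2:ℝ) ^ (j+1)) ^ k ≤ |φ y| * (K * (1 + ‖y‖) ^ k) :=
            mul_le_mul_of_nonneg_left h5 (abs_nonneg _)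
        _ = K * ((1 + ‖y‖) ^ k * |φ y|) := by ring
        _ ≤ K * M := mul_le_mul_of_nonneg_left hMy hK0
  -- per-annulus estimate
  have main : ∀ j : ℕ, ∫⁻ y in A j, ENNReal.ofReal |g y * φ y| ≤
      ENNReal.ofReal (K * M) * ENNReal.ofReal (ρ ^ j) * E := by
    intro j
    set r : ℝ := 2 ^ j with hrdef
    have hr : (0:ℝ) < r := by positivity
    have hvolQ : volume (Q j) = ENNReal.ofReal (r ^ n) := by
      rw [hQ]; rw [volume_cube, ENNReal.ofReal_pow hr.le]
    have hvne : volume (Q j) ≠ 0 := by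
      rw [hvolQ]; simp [ENNReal.ofReal_pow hr.le, pow_ne_zero, hr]
    have hvtop : volume (Q j) ≠ ⊤ := by rw [hvolQ]; exact ENNReal.ofReal_ne_top
    have hmeas1 : AEMeasurable (fun y => ENNReal.ofReal |g y|) (volume.restrict (A j)) :=
      (hgm.abs.ennreal_ofReal).aemeasurable
    have hmeas2 : AEMeasurable (fun y => ENNReal.ofReal |φ y|) (volume.restrict (A j)) :=
      (hφm.abs.ennreal_ofReal).aemeasurable
    have holder := ENNReal.lintegral_mul_le_Lp_mul_Lq (volume.restrict (A j)) hqq' hmeas1 hmeas2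
    have f1' : (∫⁻ y in A j, ENNReal.ofReal |g y| ^ q) ^ (1/q) ≤
        volume (Q j) ^ (1/q) * (ENNReal.ofReal (r ^ γ) * E) := by
      have f1 : (∫⁻ y in A j, ENNReal.ofReal |g y| ^ q) ≤
          volume (Q j) * (ENNReal.ofReal (r ^ γ) * E) ^ q := by
        calc ∫⁻ y in A j, ENNReal.ofReal |g y| ^ q
            = ∫⁻ y in A j, ENNReal.ofReal (|g y| ^ q) := by
              congr 1; funext y; exact ENNReal.ofReal_rpow_of_nonneg (abs_nonneg _) hq0.le
          _ ≤ ∫⁻ y in Q j, ENNReal.ofReal (|g y| ^ q) := lintegral_mono_set (hAsub j)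
          _ ≤ volume (Q j) * (ENNReal.ofReal (r ^ γ) * E) ^ q :=
              cube_integral_bound hq hγ g x₀ hr
      have h := ENNReal.rpow_le_rpow f1 (by positivity : (0:ℝ) ≤ 1/q)
      rwa [ENNReal.mul_rpow_of_nonneg _ _ (by positivity : (0:ℝ) ≤ 1/q),
        ← ENNReal.rpow_mul, mul_one_div_cancel hq0.ne', ENNReal.rpow_one] at h
    have f2' : (∫⁻ y in A j, ENNReal.ofReal |φ y| ^ q') ^ (1/q') ≤
        ENNReal.ofReal (K * M / r ^ k) * volume (Q j) ^ (1/q') := by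
      have hKMr0 : (0:ℝ) ≤ K * M / r ^ k := by positivity
      have f2 : (∫⁻ y in A j, ENNReal.ofReal |φ y| ^ q') ≤
          ENNReal.ofReal ((K * M / r ^ k) ^ q') * volume (Q j) := by
        calc ∫⁻ y in A j, ENNReal.ofReal |φ y| ^ q'
            ≤ ∫⁻ _ in A j, ENNReal.ofReal ((K * M / r ^ k) ^ q') :=
              setLIntegral_mono measurable_const (fun y hy => by
                rw [ENNReal.ofReal_rpow_of_nonneg (abs_nonneg _) hq'0.le]
                exact ENNReal.ofReal_le_ofReal
                  (Real.rpow_le_rpow (abs_nonneg _) (hφbd j y hy) hq'0.le))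
          _ = ENNReal.ofReal ((K * M / r ^ k) ^ q') * volume (A j) := setLIntegral_const _ _
          _ ≤ ENNReal.ofReal ((K * M / r ^ k) ^ q') * volume (Q j) :=
              mul_le_mul_right (measure_mono (hAsub j)) _
      have h := ENNReal.rpow_le_rpow f2 (by positivity : (0:ℝ) ≤ 1/q')
      rwa [ENNReal.mul_rpow_of_nonneg _ _ (by positivity : (0:ℝ) ≤ 1/q'),
        ← ENNReal.ofReal_rpow_of_nonneg hKMr0 hq'0.le,
        ← ENNReal.rpow_mul, mul_one_div_cancel hq'0.ne', ENNReal.rpow_one] at h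
    have hsum : (1:ℝ)/q + 1/q' = 1 := by
      rw [one_div, one_div]; exact hqq'.inv_add_inv_eq_one
    have hreal : r ^ n * r ^ γ * (K * M / r ^ k) = (K * M) * ρ ^ j := by
      have h1 : (r:ℝ) ^ (n:ℕ) = r ^ ((n:ℕ):ℝ) := (Real.rpow_natCast r n).symm
      have h2 : (r:ℝ) ^ (k:ℕ) = r ^ ((k:ℕ):ℝ) := (Real.rpow_natCast r k).symm
      have h3 : r ^ ((n:ℕ):ℝ) * r ^ γ / r ^ ((k:ℕ):ℝ) = r ^ ((n:ℝ) + γ - (k:ℝ)) := by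
        rw [← Real.rpow_add hr, ← Real.rpow_sub hr]
      have h4 : r ^ ((n:ℝ) + γ - (k:ℝ)) = ρ ^ j := by
        rw [hrdef, rpow_two_pow, hρ]
      calc r ^ n * r ^ γ * (K * M / r ^ k)
          = (K * M) * (r ^ (n:ℕ) * r ^ γ / r ^ (k:ℕ)) := by ring
        _ = (K * M) * ρ ^ j := by rw [h1, h2, h3, h4]
    calc ∫⁻ y in A j, ENNReal.ofReal |g y * φ y|
        = ∫⁻ y in A j, ((fun y => ENNReal.ofReal |g y|) * fun y => ENNReal.ofReal |φ y|) y := by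
          congr 1; funext y
          simp [abs_mul, ENNReal.ofReal_mul (abs_nonneg (g y))]
      _ ≤ (∫⁻ y in A j, ENNReal.ofReal |g y| ^ q) ^ (1/q) *
          (∫⁻ y in A j, ENNReal.ofReal |φ y| ^ q') ^ (1/q') := holder
      _ ≤ (volume (Q j) ^ (1/q) * (ENNReal.ofReal (r ^ γ) * E)) *
          (ENNReal.ofReal (K * M / r ^ k) * volume (Q j) ^ (1/q')) :=
          mul_le_mul' f1' f2'
      _ = (volume (Q j) ^ (1/q) * volume (Q j) ^ (1/q')) *
          (ENNReal.ofReal (r ^ γ) * ENNReal.ofReal (K * M / r ^ k)) * E := by ring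
      _ = volume (Q j) * (ENNReal.ofReal (r ^ γ) * ENNReal.ofReal (K * M / r ^ k)) * E := by
          rw [← ENNReal.rpow_add _ _ hvne hvtop, hsum, ENNReal.rpow_one]
      _ = ENNReal.ofReal (K * M) * ENNReal.ofReal (ρ ^ j) * E := by
          rw [hvolQ, ← ENNReal.ofReal_mul (by positivity), ← ENNReal.ofReal_mul (by positivity),
            ← mul_assoc, hreal, ENNReal.ofReal_mul hKM0]
  -- sum over annuli
  calc ∫⁻ y, ENNReal.ofReal |g y * φ y|
      = ∫⁻ y in ⋃ j, A j, ENNReal.ofReal |g y * φ y| := by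
        rw [hAU, Measure.restrict_univ]
    _ ≤ ∑' j, ∫⁻ y in A j, ENNReal.ofReal |g y * φ y| := lintegral_iUnion_le _ _
    _ ≤ ∑' j : ℕ, ENNReal.ofReal (K * M) * ENNReal.ofReal (ρ ^ j) * E :=
        ENNReal.tsum_le_tsum main
    _ = ENNReal.ofReal (K * M) * E * ∑' j : ℕ, (ENNReal.ofReal ρ) ^ j := by
        rw [← ENNReal.tsum_mul_left]
        congr 1; funext j
        rw [ENNReal.ofReal_pow hρ0.le]; ring
    _ = ENNReal.ofReal (K * M) * E * (1 - ENNReal.ofReal ρ)⁻¹ := by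
        rw [ENNReal.tsum_geometric]
    _ = (ENNReal.ofReal K * (1 - ENNReal.ofReal ρ)⁻¹) * ENNReal.ofReal M * E := by
        rw [ENNReal.ofReal_mul hK0]; ring

end AuxLemmas

/-- **Proposition.** If `g ∈ L^q_loc` and `η_{q,γ}(g;x₀) < ∞`, then `g` defines a tempered
distribution: for every `k > γ + n` there is a constant `C` with
`|∫ gφ| ≤ C p_k(φ) η_{q,γ}(g;x₀)` for all Schwartz `φ`. -/
theorem locLq_finite_eta_is_tempered
    (n : ℕ) (q γ : ℝ) (hq : 1 < q) (hγ : 0 < γ)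
    (g : En n → ℝ) (hg : MemLqLoc q g) (x₀ : En n) (hη : eta q γ g x₀ < ⊤)
    (k : ℕ) (hk : γ + n < k) :
    ∃ C : ℝ≥0∞, C < ⊤ ∧ ∀ φ : En n → ℝ, IsSchwartzFn φ →
      Integrable (fun y => g y * φ y) ∧
      ENNReal.ofReal |∫ y, g y * φ y| ≤ C * pSemi k φ * eta q γ g x₀ := by
  obtain ⟨hgm, -⟩ := hg
  set E := eta q γ g x₀ with hE
  set ρ : ℝ := (2:ℝ) ^ ((n:ℝ) + γ - (k:ℝ)) with hρ
  set C : ℝ≥0∞ := ENNReal.ofReal ((4 * (1 + ‖x₀‖)) ^ k) * (1 - ENNReal.ofReal ρ)⁻¹ with hC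
  have hρ1 : ρ < 1 := Real.rpow_lt_one_of_one_lt_of_neg (by norm_num) (by
    have : (γ:ℝ) + n < k := hk
    linarith)
  have hCfin : C < ⊤ := by
    refine ENNReal.mul_lt_top ENNReal.ofReal_lt_top ?_
    rw [ENNReal.inv_lt_top, tsub_pos_iff_lt]
    exact ENNReal.ofReal_lt_one.mpr hρ1
  refine ⟨C, hCfin, fun φ hφ => ?_⟩
  have hφc : Continuous φ := hφ.1.continuous
  have hφm : Measurable φ := hφc.measurable
  set S : ℝ≥0∞ := ⨆ y : En n, ENNReal.ofReal ((1 + ‖y‖) ^ k * |φ y|) with hS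
  have hSfin : S < ⊤ := by
    obtain ⟨C₀, hC₀⟩ := hφ.2 k (fun _ => 0)
    rw [pderivM_zero] at hC₀
    exact lt_of_le_of_lt (iSup_le fun y => ENNReal.ofReal_le_ofReal (hC₀ y))
      ENNReal.ofReal_lt_top
  set M : ℝ := S.toReal with hMdef
  have hMS : ENNReal.ofReal M = S := ENNReal.ofReal_toReal hSfin.ne
  have hM : ∀ y, (1 + ‖y‖) ^ k * |φ y| ≤ M := by
    intro y
    rw [← ENNReal.ofReal_le_ofReal_iff ENNReal.toReal_nonneg, hMS]
    exact le_iSup (fun y => ENNReal.ofReal ((1 + ‖y‖) ^ k * |φ y|)) y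
  have hkey := key_estimate hq hγ hgm x₀ hk hφm hM
  have hfin : (∫⁻ y, ENNReal.ofReal |g y * φ y|) < ⊤ :=
    lt_of_le_of_lt hkey
      (ENNReal.mul_lt_top (ENNReal.mul_lt_top hCfin ENNReal.ofReal_lt_top) hη)
  have hint : Integrable (fun y => g y * φ y) := by
    refine ⟨(hgm.mul hφm).aestronglyMeasurable, ?_⟩
    rw [hasFiniteIntegral_iff_norm]
    simpa [Real.norm_eq_abs, abs_mul, ENNReal.ofReal_mul (abs_nonneg _)] using hfin
  refine ⟨hint, ?_⟩
  have habs : |∫ y, g y * φ y| ≤ ∫ y, |g y * φ y| := by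
    simpa only [Real.norm_eq_abs] using
      norm_integral_le_integral_norm (μ := volume) (fun y => g y * φ y)
  calc ENNReal.ofReal |∫ y, g y * φ y|
      ≤ ENNReal.ofReal (∫ y, |g y * φ y|) := ENNReal.ofReal_le_ofReal habs
    _ = ∫⁻ y, ENNReal.ofReal |g y * φ y| :=
        ofReal_integral_eq_lintegral_ofReal hint.abs
          (Filter.Eventually.of_forall fun y => abs_nonneg _)
    _ ≤ C * ENNReal.ofReal M * E := hkey
    _ = C * S * E := by rw [hMS]
    _ ≤ C * pSemi k φ * E :=
        mul_le_mul_left (mul_le_mul_right (sup_le_pSemi k φ) C) E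

end
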